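/- Let p ≥ 3 be a prime and let i, m be integers with 1 ≤ i ≤ p-1 and 1 ≤ m ≤ p. Then p divides the (p-1)-restricted Stirling number of the second kind S(i+p, m)_{≤ p-1}. -/

import Mathlib

/-!
Cycling `p` of the points of `Fin (i + p)` is a permutation of order `p` with a fixed point, and
it acts on the partitions being counted, so it suffices that none of them is invariant. In an
invariant partition the block of the fixed point is invariant, while the block of a moved point is
not, since an invariant block contains the whole orbit, of size `p`, of each of its moved points.
The orbit of the latter block then consists of `p` blocks besides the first one: too many.
-/

/-- `r`-restricted Stirling number of the second kind: number of partitions of an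
`n`-set into `k` nonempty blocks, each of size at most `r`. -/
noncomputable def stirlingRes (n k r : ℕ) : ℕ :=
  Nat.card {P : Finpartition (Finset.univ : Finset (Fin n)) //
    P.parts.card = k ∧ ∀ b ∈ P.parts, b.card ≤ r}

open Finset Pointwise MulAction

section PrimeOrder

variable {G X : Type*} [Group G] [MulAction G X] {p : ℕ} {g : G}

lemma MulAction.ncard_orbit_zpowers_eq_prime (hp : p.Prime) (hg : g ^ p = 1) {x : X}
    (hgx : g • x ≠ x) : (orbit (Subgroup.zpowers g) x).ncard = p := by
  have := Fact.mk hp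
  have hord : orderOf g = p := orderOf_eq_prime hg (by rintro rfl; simp at hgx)
  have hdvd : (orbit (Subgroup.zpowers g) x).ncard ∣ p := by
    rw [← index_stabilizer, ← hord, ← Nat.card_zpowers]
    exact Subgroup.index_dvd_card _
  refine (hp.eq_one_or_self_of_dvd _ hdvd).resolve_left fun h => hgx ?_
  obtain ⟨y, hy⟩ := Set.ncard_eq_one.1 h
  have hgx_mem : g • x ∈ orbit (Subgroup.zpowers g) x := ⟨⟨g, Subgroup.mem_zpowers g⟩, rfl⟩
  have hx_mem : x ∈ orbit (Subgroup.zpowers g) x := mem_orbit_self x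
  rw [hy] at hgx_mem hx_mem
  exact hgx_mem.trans hx_mem.symm

lemma Finset.prime_le_card_of_smul_finset_eq [DecidableEq X] (hp : p.Prime) (hg : g ^ p = 1)
    {s : Finset X} (hs : g • s = s) {x : X} (hx : x ∈ s) (hgx : g • x ≠ x) : p ≤ #s := by
  have horbit : orbit (Subgroup.zpowers g) x ⊆ s := by
    rintro _ ⟨⟨h, hh⟩, rfl⟩
    obtain ⟨k, rfl⟩ := Subgroup.mem_zpowers_iff.1 hh
    have hk : g ^ k ∈ stabilizer G s := Subgroup.zpow_mem _ (mem_stabilizer_iff.2 hs) k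
    rw [← mem_stabilizer_iff.1 hk]
    exact smul_mem_smul_finset hx
  calc p = (orbit (Subgroup.zpowers g) x).ncard := (ncard_orbit_zpowers_eq_prime hp hg hgx).symm
    _ ≤ (s : Set X).ncard := Set.ncard_le_ncard horbit s.finite_toSet
    _ = #s := Set.ncard_coe_finset s

lemma prime_dvd_card_of_forall_smul_ne [Finite X] (hp : p.Prime) (hg : g ^ p = 1)
    (h : ∀ x : X, g • x ≠ x) : p ∣ Nat.card X := by
  classical
  have := Fact.mk hp
  have := Fintype.ofFinite X
  rw [Nat.card_eq_fintype_card]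
  by_contra hndvd
  have hσ : (toPerm g : Equiv.Perm X) ^ p ^ 1 = 1 := by
    rw [pow_one]
    exact (map_pow (toPermHom G X) g p).symm.trans (by rw [hg, map_one])
  obtain ⟨x, hx⟩ := Equiv.Perm.exists_fixed_point_of_prime hndvd hσ
  exact h x hx

end PrimeOrder

namespace Finpartition

variable {G α : Type*} [Group G] [MulAction G α] [Fintype α] [DecidableEq α]

instance : SMul G (Finpartition (univ : Finset α)) where
  smul g P := (P.map ⟨(toPerm g : Equiv.Perm α).finsetCongr, map_subset_map⟩).copy
    (map_univ_equiv _)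

@[simp]
lemma parts_smul (g : G) (P : Finpartition (univ : Finset α)) : (g • P).parts = g • P.parts := by
  change P.parts.map (toPerm g : Equiv.Perm α).finsetCongr.toEmbedding = _
  rw [map_eq_image, smul_finset_def]
  refine image_congr fun s _ => ?_
  simp only [Function.Embedding.coeFn_mk, Equiv.finsetCongr_apply, map_eq_image, smul_finset_def]
  rfl

instance : MulAction G (Finpartition (univ : Finset α)) where
  one_smul P := Finpartition.ext (by rw [parts_smul, one_smul])
  mul_smul g h P := Finpartition.ext (by rw [parts_smul, parts_smul, parts_smul, mul_smul])

variable (G) in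
def restricted (k r : ℕ) : SubMulAction G (Finpartition (univ : Finset α)) where
  carrier := {P | #P.parts = k ∧ ∀ b ∈ P.parts, #b ≤ r}
  smul_mem' g P := by
    rintro ⟨hk, hr⟩
    refine ⟨by rw [parts_smul, card_smul_finset, hk], fun b hb => ?_⟩
    rw [parts_smul, ← inv_smul_mem_iff] at hb
    rw [← card_smul_finset g⁻¹ b]
    exact hr _ hb

theorem smul_ne_self {p : ℕ} (hp : p.Prime) {g : G} (hg : g ^ p = 1) {x y : α} (hx : g • x = x)
    (hy : g • y ≠ y) (P : Finpartition (univ : Finset α)) (hparts : #P.parts ≤ p)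
    (hblocks : ∀ b ∈ P.parts, #b < p) : g • P ≠ P := by
  intro hP
  have hinv : g • P.parts = P.parts := by rw [← parts_smul, hP]
  have hmem {b : Finset α} (hb : b ∈ P.parts) : g • b ∈ P.parts := hinv ▸ smul_mem_smul_finset hb
  obtain ⟨c, hc, hxc⟩ := P.exists_mem (mem_univ x)
  obtain ⟨b, hb, hyb⟩ := P.exists_mem (mem_univ y)
  have hgxc : g • x ∈ g • c := smul_mem_smul_finset hxc
  rw [hx] at hgxc
  have hcfix : g • c = c := P.eq_of_mem_parts (hmem hc) hc hgxc hxc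
  have hbfix : g • b ≠ b := fun h =>
    (hblocks b hb).not_ge (prime_le_card_of_smul_finset_eq hp hg h hyb hy)
  have hbc : b ≠ c := fun h => hbfix (h ▸ hcfix)
  have hle : p ≤ #(P.parts.erase c) := prime_le_card_of_smul_finset_eq hp hg
    (by rw [erase_eq, smul_finset_sdiff, smul_finset_singleton, hinv, hcfix])
    (mem_erase.2 ⟨hbc, hb⟩) hbfix
  have := card_erase_of_mem hc
  have := hp.pos
  omega

end Finpartition

lemma Fin.exists_perm_pow_eq_one_of_two_le_of_lt {p n : ℕ} (hp : 2 ≤ p) (hpn : p < n) :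
    ∃ σ : Equiv.Perm (Fin n), σ ^ p = 1 ∧ (∃ x : Fin n, σ • x = x) ∧ ∃ y : Fin n, σ • y ≠ y := by
  have := NeZero.mk (n := n) (by omega)
  let j : Fin n := ⟨p - 1, by omega⟩
  have hj : j ≠ 0 := Fin.ne_of_val_ne (by rw [Fin.val_zero]; exact Nat.sub_ne_zero_of_lt hp)
  refine ⟨cycleRange j, ?_,
    ⟨⟨p, hpn⟩, cycleRange_of_gt (Fin.lt_def.2 (show p - 1 < p by omega))⟩, ⟨0, ?_⟩⟩
  · rw [← orderOf_dvd_iff_pow_eq_one, ← Equiv.Perm.lcm_cycleType, cycleType_cycleRange hj]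
    simp [j, Nat.sub_add_cancel (one_le_two.trans hp)]
  · rw [Equiv.Perm.smul_def, cycleRange_of_le (Fin.zero_le j), if_neg hj.symm, zero_add]
    exact Fin.one_eq_zero_iff.not.2 (by omega)

theorem stmt_13_general (p i m : ℕ) (hp : p.Prime) (hi1 : 1 ≤ i) (hm2 : m ≤ p) :
    p ∣ stirlingRes (i + p) m (p - 1) := by
  obtain ⟨σ, hσ, ⟨x, hx⟩, y, hy⟩ := Fin.exists_perm_pow_eq_one_of_two_le_of_lt hp.two_le
    (show p < i + p by omega)
  change p ∣ Nat.card (Finpartition.restricted (Equiv.Perm (Fin (i + p))) m (p - 1))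
  refine prime_dvd_card_of_forall_smul_ne hp hσ fun P hP => ?_
  obtain ⟨P, hk, hr⟩ := P
  exact Finpartition.smul_ne_self hp hσ hx hy P (hk ▸ hm2)
    (fun b hb => Nat.lt_of_le_pred hp.pos (hr b hb)) (congrArg Subtype.val hP)

theorem stmt_13 (p i m : ℕ) (hp : p.Prime) (hp3 : 3 ≤ p) (hi1 : 1 ≤ i) (hi2 : i ≤ p - 1)
    (hm1 : 1 ≤ m) (hm2 : m ≤ p) :
    p ∣ stirlingRes (i + p) m (p - 1) :=
  stmt_13_general p i m hp hi1 hm2
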